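/- arXiv:1902.07055 — 8 statements merged into one kernel-verified Lean document; each statement's English description precedes it below -/
import Mathlib

section
/- Let b,ℓ ≥ 1 be integers and let x, z ∈ {0,…,s−1}^ℓ be such that z_k − x_k is even for every coordinate k ∈ {1,…,ℓ}. Then in the weighted graph H_{b,ℓ} there is exactly one walk of minimum weighted length from v_{0,x} to v_{2ℓ,z}, and this unique shortest walk passes through the vertex v_{ℓ,(x+z)/2}. -/
/-- The vertex set of the graph `H_{b,ℓ}`: levels `0,…,2ℓ`, each a copy of `{0,…,2^b-1}^ℓ`. -/
abbrev HVert (b ℓ : ℕ) := Fin (2 * ℓ + 1) × (Fin ℓ → Fin (2 ^ b))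

/-- The (0-indexed) coordinate `c(i)` that may change on a step from level `i` to `i+1`. -/
def cidx (ℓ i : ℕ) : ℕ := if i < ℓ then i else 2 * ℓ - 1 - i

/-- `u` is one level below `v` and their coordinate vectors agree outside coordinate
`c(level of u)`. -/
def HStep {b ℓ : ℕ} (u v : HVert b ℓ) : Prop :=
  (u.1 : ℕ) + 1 = (v.1 : ℕ) ∧ ∀ k : Fin ℓ, (k : ℕ) ≠ cidx ℓ (u.1 : ℕ) → u.2 k = v.2 k

/-- The graph `H_{b,ℓ}`. -/
def HGraph (b ℓ : ℕ) : SimpleGraph (HVert b ℓ) where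
  Adj u v := HStep u v ∨ HStep v u
  symm := ⟨fun _ _ h => h.symm⟩
  loopless := by
    constructor
    intro u h
    rcases h with h | h <;> exact absurd h.1 (by omega)

/-- The weight of an edge of `H_{b,ℓ}`: `A + (difference at the changing coordinate)²`,
where `A = 3ℓs²`, `s = 2^b`.  (For adjacent vertices all other coordinates agree, so the
sum below has a single nonzero term.) -/
def HWeight {b ℓ : ℕ} (u v : HVert b ℓ) : ℕ :=
  3 * ℓ * (2 ^ b) ^ 2 + ∑ k : Fin ℓ, (((u.2 k : ℤ) - ((v.2 k : ℕ) : ℤ)).natAbs) ^ 2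

/-- The weighted length of a walk in `H_{b,ℓ}`: the sum of the weights of its edges. -/
def hwlen {b ℓ : ℕ} {u v : HVert b ℓ} (p : (HGraph b ℓ).Walk u v) : ℕ :=
  (p.darts.map (fun d => HWeight d.toProd.1 d.toProd.2)).sum

/-- The weighted distance in `H_{b,ℓ}`: the minimum weighted length of a walk. -/
noncomputable def hwdist (b ℓ : ℕ) (u v : HVert b ℓ) : ℕ :=
  sInf {L : ℕ | ∃ p : (HGraph b ℓ).Walk u v, hwlen p = L}

/-- The coordinatewise midpoint `(x+z)/2`. -/
def midVec {b ℓ : ℕ} (x z : Fin ℓ → Fin (2 ^ b)) : Fin ℓ → Fin (2 ^ b) :=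
  fun k => ⟨((x k : ℕ) + (z k : ℕ)) / 2, by
    have hx := (x k).isLt
    have hz := (z k).isLt
    omega⟩

namespace HProof
open SimpleGraph Walk Finset

variable {b ℓ : ℕ}

@[simp] lemma hwlen_nil {u : HVert b ℓ} : hwlen (Walk.nil' u) = 0 := rfl

@[simp] lemma hwlen_cons {u v w : HVert b ℓ} (h : (HGraph b ℓ).Adj u v)
    (p : (HGraph b ℓ).Walk v w) : hwlen (Walk.cons h p) = HWeight u v + hwlen p := by
  simp [hwlen]

lemma walk_level {u v : HVert b ℓ} (q : (HGraph b ℓ).Walk u v) :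
    (v.1:ℕ) ≤ (u.1:ℕ) + q.length ∧ (u.1:ℕ) ≤ (v.1:ℕ) + q.length ∧
    ((u.1:ℕ) + (v.1:ℕ) + q.length) % 2 = 0 := by
  induction q with
  | nil => simp; omega
  | cons h p ih =>
    simp only [Walk.length_cons]
    rcases h with h | h <;> (obtain ⟨h1, -⟩ := h) <;> omega

lemma hwlen_ge {u v : HVert b ℓ} (q : (HGraph b ℓ).Walk u v) :
    q.length * (3 * ℓ * (2 ^ b) ^ 2) ≤ hwlen q := by
  induction q with
  | nil => simp
  | @cons a c d h p ih =>
    simp only [Walk.length_cons, hwlen_cons]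
    have h2 : 3 * ℓ * (2 ^ b) ^ 2 ≤ HWeight a c := Nat.le_add_right _ _
    calc (p.length + 1) * (3 * ℓ * (2 ^ b) ^ 2)
        = p.length * (3 * ℓ * (2 ^ b) ^ 2) + 3 * ℓ * (2 ^ b) ^ 2 := by ring
      _ ≤ hwlen p + HWeight a c := Nat.add_le_add ih h2
      _ = HWeight a c + hwlen p := by ring

lemma hwlen_eq_sum {u v : HVert b ℓ} (q : (HGraph b ℓ).Walk u v) :
    hwlen q = ∑ i ∈ Finset.range q.length, HWeight (q.getVert i) (q.getVert (i+1)) := by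
  induction q with
  | nil => simp
  | cons h p ih =>
    rw [hwlen_cons, ih, Walk.length_cons, Finset.sum_range_succ']
    simp [Walk.getVert_cons_succ]
    ring

lemma mono_step {u v : HVert b ℓ} (q : (HGraph b ℓ).Walk u v)
    (hlen : q.length + (u.1:ℕ) = (v.1:ℕ)) :
    ∀ i < q.length, HStep (q.getVert i) (q.getVert (i+1)) := by
  induction q with
  | nil => intro i hi; simp at hi
  | @cons a c d h p ih =>
    have hb := walk_level p
    simp only [Walk.length_cons] at hlen
    have hstep : HStep a c := by
      rcases h with h | h
      · exact h
      · exfalso; have := h.1; omega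
    have hlen' : p.length + (c.1:ℕ) = (d.1:ℕ) := by have := hstep.1; omega
    intro i hi
    cases i with
    | zero =>
      have h1 : (Walk.cons h p).getVert 0 = a := Walk.getVert_zero _
      have h2 : (Walk.cons h p).getVert 1 = c := by
        rw [Walk.getVert_cons_succ]; exact Walk.getVert_zero _
      rw [h1, h2]; exact hstep
    | succ n =>
      rw [Walk.getVert_cons_succ, Walk.getVert_cons_succ]
      exact ih hlen' n (by simp only [Walk.length_cons] at hi; omega)

lemma mono_level {u v : HVert b ℓ} (q : (HGraph b ℓ).Walk u v)
    (hlen : q.length + (u.1:ℕ) = (v.1:ℕ)) :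
    ∀ i, i ≤ q.length → ((q.getVert i).1 : ℕ) = (u.1:ℕ) + i := by
  intro i
  induction i with
  | zero => intro _; simp
  | succ n ihn =>
    intro hi
    have h1 := ihn (by omega)
    have h2 := (mono_step q hlen n (by omega)).1
    omega

lemma walk_ext {V : Type*} {G : SimpleGraph V} {u v : V} (q p : G.Walk u v)
    (hl : q.length = p.length) (hv : ∀ i, q.getVert i = p.getVert i) : q = p := by
  induction q with
  | nil =>
    cases p with
    | nil => rfl
    | cons h' p => simp [Walk.length_cons] at hl
  | @cons a c d h q ih =>
    cases p with
    | nil => simp [Walk.length_cons] at hl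
    | @cons _ c' _ h' p =>
      have hc : c = c' := by
        have h1 := hv 1
        rw [Walk.getVert_cons_succ, Walk.getVert_cons_succ, Walk.getVert_zero,
          Walk.getVert_zero] at h1
        exact h1
      subst hc
      have hq : q = p := by
        refine ih p ?_ ?_
        · simpa [Walk.length_cons] using hl
        · intro i
          have := hv (i+1)
          rwa [Walk.getVert_cons_succ, Walk.getVert_cons_succ] at this
      rw [hq]

def gfun (x z : Fin ℓ → Fin (2 ^ b)) (i : ℕ) : HVert b ℓ :=
  (⟨min i (2*ℓ), by omega⟩,
   fun k => if i ≤ (k:ℕ) then x k else if i ≤ 2*ℓ-1-(k:ℕ) then midVec x z k else z k)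

lemma gfun_adj (x z : Fin ℓ → Fin (2 ^ b)) (i : ℕ) (hi : i < 2*ℓ) :
    HStep (gfun x z i) (gfun x z (i+1)) := by
  constructor
  · show min i (2*ℓ) + 1 = min (i+1) (2*ℓ)
    omega
  · intro k hk
    have hkl := k.isLt
    have hmin : ((gfun x z i).1 : ℕ) = i := by show min i (2*ℓ) = i; omega
    rw [hmin] at hk
    show (if i ≤ (k:ℕ) then x k else if i ≤ 2*ℓ-1-(k:ℕ) then midVec x z k else z k)
      = (if i+1 ≤ (k:ℕ) then x k else if i+1 ≤ 2*ℓ-1-(k:ℕ) then midVec x z k else z k)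
    simp only [cidx] at hk
    split_ifs at hk ⊢ <;> first | rfl | (exfalso; omega)

lemma gfun_hadj (x z : Fin ℓ → Fin (2 ^ b)) (i : ℕ) (hi : i < 2*ℓ) :
    (HGraph b ℓ).Adj (gfun x z i) (gfun x z (i+1)) := Or.inl (gfun_adj x z i hi)

def mkWalk (x z : Fin ℓ → Fin (2 ^ b)) :
    (r : ℕ) → r ≤ 2*ℓ → (HGraph b ℓ).Walk (gfun x z 0) (gfun x z r)
  | 0, _ => Walk.nil
  | (r+1), hr => (mkWalk x z r (by omega)).concat (gfun_hadj x z r (by omega))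

lemma mkWalk_length (x z : Fin ℓ → Fin (2 ^ b)) :
    ∀ (r : ℕ) (hr : r ≤ 2*ℓ), (mkWalk x z r hr).length = r := by
  intro r
  induction r with
  | zero => intro _; rfl
  | succ n ihn => intro hr; rw [mkWalk, Walk.length_concat, ihn]

lemma mkWalk_getVert (x z : Fin ℓ → Fin (2 ^ b)) :
    ∀ (r : ℕ) (hr : r ≤ 2*ℓ) (i : ℕ), i ≤ r → (mkWalk x z r hr).getVert i = gfun x z i := by
  intro r
  induction r with
  | zero => intro _ i hi; interval_cases i; exact Walk.getVert_zero _
  | succ n ihn =>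
    intro hr i hi
    rw [mkWalk, Walk.concat_eq_append, Walk.getVert_append, mkWalk_length]
    rcases Nat.lt_or_ge i n with h | h
    · rw [if_pos h]; exact ihn (by omega) i (by omega)
    · rw [if_neg (by omega)]
      rcases Nat.eq_or_lt_of_le h with h' | h'
      · subst h'; simp only [Nat.sub_self]; rw [Walk.getVert_zero]
      · have : i = n + 1 := by omega
        subst this
        have : n + 1 - n = 1 := by omega
        rw [this, Walk.getVert_cons_succ, Walk.getVert_zero]

lemma sq_key_id {p q a m : ℤ} (hm : 2*m = p + q) :
    (p-a)^2 + (a-q)^2 = (p-m)^2 + (m-q)^2 + 2*(a-m)^2 := by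
  have hq : q = 2*m - p := by omega
  subst hq; ring

lemma sq_key {p q a m : ℤ} (hm : 2*m = p + q) :
    (p-m)^2 + (m-q)^2 ≤ (p-a)^2 + (a-q)^2 := by
  have h := sq_key_id (a := a) hm
  have h2 : 0 ≤ 2*(a-m)^2 := by positivity
  linarith

lemma sq_key_eq {p q a m : ℤ} (hm : 2*m = p + q)
    (h : (p-a)^2 + (a-q)^2 ≤ (p-m)^2 + (m-q)^2) : a = m := by
  rw [sq_key_id (a := a) hm] at h
  rw [sq_key_id (a := m) hm] at h
  have h2 : (a - m)^2 ≤ 0 := by linarith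
  have h3 : (a - m)^2 = 0 := le_antisymm h2 (sq_nonneg _)
  have := sq_eq_zero_iff.mp h3
  omega

lemma cast_natAbs_sq (d : ℤ) : ((d.natAbs ^ 2 : ℕ) : ℤ) = d ^ 2 := by
  rw [Nat.cast_pow, Int.natAbs_sq]

lemma natAbs_key {X Z A' M : ℕ} (hm : 2*M = X + Z) :
    ((X:ℤ) - (M:ℤ)).natAbs^2 + ((M:ℤ) - (Z:ℤ)).natAbs^2
      ≤ ((X:ℤ) - (A':ℤ)).natAbs^2 + ((A':ℤ) - (Z:ℤ)).natAbs^2 := by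
  have key := sq_key (p := (X:ℤ)) (q := (Z:ℤ)) (a := (A':ℤ)) (m := (M:ℤ)) (by push_cast; omega)
  have h1 := cast_natAbs_sq ((X:ℤ) - (M:ℤ))
  have h2 := cast_natAbs_sq ((M:ℤ) - (Z:ℤ))
  have h3 := cast_natAbs_sq ((X:ℤ) - (A':ℤ))
  have h4 := cast_natAbs_sq ((A':ℤ) - (Z:ℤ))
  have : (((((X:ℤ) - (M:ℤ)).natAbs^2 + (((M:ℤ) - (Z:ℤ)).natAbs)^2 : ℕ)) : ℤ)
      ≤ ((((X:ℤ) - (A':ℤ)).natAbs^2 + (((A':ℤ) - (Z:ℤ)).natAbs)^2 : ℕ) : ℤ) := by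
    push_cast [h1, h2, h3, h4]
    exact key
  exact_mod_cast this

lemma natAbs_key_eq {X Z A' M : ℕ} (hm : 2*M = X + Z)
    (h : ((X:ℤ) - (A':ℤ)).natAbs^2 + ((A':ℤ) - (Z:ℤ)).natAbs^2
      = ((X:ℤ) - (M:ℤ)).natAbs^2 + ((M:ℤ) - (Z:ℤ)).natAbs^2) : A' = M := by
  have h1 := cast_natAbs_sq ((X:ℤ) - (M:ℤ))
  have h2 := cast_natAbs_sq ((M:ℤ) - (Z:ℤ))
  have h3 := cast_natAbs_sq ((X:ℤ) - (A':ℤ))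
  have h4 := cast_natAbs_sq ((A':ℤ) - (Z:ℤ))
  have hZ : ((X:ℤ) - (A':ℤ))^2 + ((A':ℤ) - (Z:ℤ))^2
      = ((X:ℤ) - (M:ℤ))^2 + ((M:ℤ) - (Z:ℤ))^2 := by
    have hc : ((((X:ℤ) - (A':ℤ)).natAbs^2 + (((A':ℤ) - (Z:ℤ)).natAbs)^2 : ℕ) : ℤ)
        = ((((X:ℤ) - (M:ℤ)).natAbs^2 + (((M:ℤ) - (Z:ℤ)).natAbs)^2 : ℕ) : ℤ) := by
      exact_mod_cast h
    push_cast [h1, h2, h3, h4] at hc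
    exact hc
  have := sq_key_eq (p := (X:ℤ)) (q := (Z:ℤ)) (a := (A':ℤ)) (m := (M:ℤ))
    (by push_cast; omega) (le_of_eq hZ)
  exact_mod_cast this


variable {x z : Fin ℓ → Fin (2 ^ b)}

lemma const_coord (q : (HGraph b ℓ).Walk ((⟨0, by omega⟩ : Fin (2*ℓ+1)), x)
      ((⟨2*ℓ, by omega⟩ : Fin (2*ℓ+1)), z))
    (hlen : q.length = 2*ℓ) (k : Fin ℓ) :
    ∀ i j, i ≤ j → j ≤ 2*ℓ → (∀ m, i ≤ m → m < j → (k:ℕ) ≠ cidx ℓ m) →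
      (q.getVert i).2 k = (q.getVert j).2 k := by
  have hlen0 : q.length + ((((⟨0, by omega⟩ : Fin (2*ℓ+1)), x) : HVert b ℓ).1 : ℕ)
      = ((((⟨2*ℓ, by omega⟩ : Fin (2*ℓ+1)), z) : HVert b ℓ).1 : ℕ) := by simpa using hlen
  intro i j hij hj hc
  induction j with
  | zero =>
    have : i = 0 := by omega
    subst this; rfl
  | succ n ihn =>
    rcases Nat.lt_or_ge i (n+1) with hlt | hge
    · have h1 : (q.getVert i).2 k = (q.getVert n).2 k :=
        ihn (by omega) (by omega) (fun m hm1 hm2 => hc m hm1 (by omega))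
      have hstep := mono_step q hlen0 n (by omega)
      have hlevel : ((q.getVert n).1 : ℕ) = n := by
        simpa using mono_level q hlen0 n (by omega)
      rw [h1]
      exact hstep.2 k (by rw [hlevel]; exact hc n (by omega) (by omega))
    · have : i = n+1 := by omega
      subst this; rfl

set_option maxHeartbeats 1000000 in
lemma hwlen_mono (q : (HGraph b ℓ).Walk ((⟨0, by omega⟩ : Fin (2*ℓ+1)), x)
      ((⟨2*ℓ, by omega⟩ : Fin (2*ℓ+1)), z))
    (hlen : q.length = 2*ℓ) :
    hwlen q = 2*ℓ*(3*ℓ*(2^b)^2) + ∑ k : Fin ℓ,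
      ((((x k : ℕ):ℤ) - (((q.getVert ((k:ℕ)+1)).2 k : ℕ):ℤ)).natAbs ^ 2
       + ((((q.getVert ((k:ℕ)+1)).2 k : ℕ):ℤ) - ((z k : ℕ):ℤ)).natAbs ^ 2) := by
  have hlen0 : q.length + ((((⟨0, by omega⟩ : Fin (2*ℓ+1)), x) : HVert b ℓ).1 : ℕ)
      = ((((⟨2*ℓ, by omega⟩ : Fin (2*ℓ+1)), z) : HVert b ℓ).1 : ℕ) := by simpa using hlen
  have hstep := mono_step q hlen0
  have hlev : ∀ i, i ≤ q.length → ((q.getVert i).1:ℕ) = i := fun i hi => by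
    simpa using mono_level q hlen0 i hi
  rw [hwlen_eq_sum, hlen]
  simp only [HWeight]
  rw [Finset.sum_add_distrib, Finset.sum_const, Finset.card_range, smul_eq_mul]
  congr 1
  rw [Finset.sum_comm]
  refine Finset.sum_congr rfl (fun k _ => ?_)
  have hkl := k.isLt
  have hvan : ∀ i ∈ Finset.range (2*ℓ), i ∉ ({(k:ℕ), 2*ℓ-1-(k:ℕ)} : Finset ℕ) →
      ((((q.getVert i).2 k : ℕ):ℤ) - (((q.getVert (i+1)).2 k : ℕ):ℤ)).natAbs ^ 2 = 0 := by
    intro i hi hni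
    simp only [Finset.mem_range] at hi
    simp only [Finset.mem_insert, Finset.mem_singleton] at hni
    push_neg at hni
    have hs := hstep i (by omega)
    have heqc : (q.getVert i).2 k = (q.getVert (i+1)).2 k := by
      apply hs.2
      rw [hlev i (by omega)]
      simp only [cidx]; split <;> omega
    rw [heqc]; simp
  have hsub : ({(k:ℕ), 2*ℓ-1-(k:ℕ)} : Finset ℕ) ⊆ Finset.range (2*ℓ) := by
    intro m hm
    simp only [Finset.mem_insert, Finset.mem_singleton] at hm
    simp only [Finset.mem_range]
    omega
  rw [← Finset.sum_subset hsub hvan]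
  rw [Finset.sum_pair (by omega : (k:ℕ) ≠ 2*ℓ-1-(k:ℕ))]
  have h0 : q.getVert 0 = ((⟨0, by omega⟩ : Fin (2*ℓ+1)), x) := Walk.getVert_zero q
  have hN : q.getVert (2*ℓ) = ((⟨2*ℓ, by omega⟩ : Fin (2*ℓ+1)), z) := by
    have hh := Walk.getVert_length q
    rwa [hlen] at hh
  have hx : (q.getVert (k:ℕ)).2 k = x k := by
    have := const_coord q hlen k 0 (k:ℕ) (by omega) (by omega)
      (fun m h1 h2 => by simp only [cidx]; split <;> omega)
    rw [← this, h0]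
  have ha : (q.getVert (2*ℓ-1-(k:ℕ))).2 k = (q.getVert ((k:ℕ)+1)).2 k :=
    (const_coord q hlen k ((k:ℕ)+1) (2*ℓ-1-(k:ℕ)) (by omega) (by omega)
      (fun m h1 h2 => by simp only [cidx]; split <;> omega)).symm
  have hz' : (q.getVert (2*ℓ-1-(k:ℕ)+1)).2 k = z k := by
    have he : 2*ℓ-1-(k:ℕ)+1 = 2*ℓ-(k:ℕ) := by omega
    rw [he]
    have := const_coord q hlen k (2*ℓ-(k:ℕ)) (2*ℓ) (by omega) (by omega)
      (fun m h1 h2 => by simp only [cidx]; split <;> omega)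
    rw [this, hN]
  rw [hx, ha, hz']

end HProof

set_option maxHeartbeats 1000000 in
open HProof SimpleGraph in
/-- For `x, z` with all coordinates of the same parity, there is a unique walk of minimum
weighted length from `v_{0,x}` to `v_{2ℓ,z}` in `H_{b,ℓ}`, and it passes through
`v_{ℓ,(x+z)/2}`. -/
theorem unique_shortest_walk_through_midpoint (b ℓ : ℕ) (hb : 1 ≤ b) (hℓ : 1 ≤ ℓ)
    (x z : Fin ℓ → Fin (2 ^ b))
    (heven : ∀ k : Fin ℓ, (2 : ℤ) ∣ ((z k : ℤ) - (x k : ℤ))) :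
    ∃ p : (HGraph b ℓ).Walk (⟨0, by omega⟩, x) (⟨2 * ℓ, by omega⟩, z),
      (hwlen p = hwdist b ℓ (⟨0, by omega⟩, x) (⟨2 * ℓ, by omega⟩, z) ∧
        ((⟨ℓ, by omega⟩ : Fin (2 * ℓ + 1)), midVec x z) ∈ p.support) ∧
      ∀ q : (HGraph b ℓ).Walk (⟨0, by omega⟩, x) (⟨2 * ℓ, by omega⟩, z),
        hwlen q = hwdist b ℓ (⟨0, by omega⟩, x) (⟨2 * ℓ, by omega⟩, z) → q = p := by
  classical
  have hmid : ∀ k : Fin ℓ, 2 * ((midVec x z k : ℕ)) = (x k : ℕ) + (z k : ℕ) := by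
    intro k
    have h2 := heven k
    have hxk := (x k).isLt
    have hzk := (z k).isLt
    show 2 * (((x k : ℕ) + (z k : ℕ)) / 2) = _
    omega
  have hg0 : gfun x z 0 = ((⟨0, by omega⟩ : Fin (2*ℓ+1)), x) := by
    unfold gfun
    refine Prod.ext_iff.mpr ⟨Fin.ext (by show min 0 (2*ℓ) = 0; omega), funext fun k => ?_⟩
    show (if 0 ≤ (k:ℕ) then x k else if 0 ≤ 2*ℓ-1-(k:ℕ) then midVec x z k else z k) = x k
    rw [if_pos (Nat.zero_le _)]
  have hg2 : gfun x z (2*ℓ) = ((⟨2*ℓ, by omega⟩ : Fin (2*ℓ+1)), z) := by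
    unfold gfun
    refine Prod.ext_iff.mpr ⟨Fin.ext (by show min (2*ℓ) (2*ℓ) = 2*ℓ; omega), funext fun k => ?_⟩
    have hkl := k.isLt
    show (if 2*ℓ ≤ (k:ℕ) then x k else if 2*ℓ ≤ 2*ℓ-1-(k:ℕ) then midVec x z k else z k) = z k
    rw [if_neg (by omega), if_neg (by omega)]
  have hgl : gfun x z ℓ = ((⟨ℓ, by omega⟩ : Fin (2*ℓ+1)), midVec x z) := by
    unfold gfun
    refine Prod.ext_iff.mpr ⟨Fin.ext (by show min ℓ (2*ℓ) = ℓ; omega), funext fun k => ?_⟩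
    have hkl := k.isLt
    show (if ℓ ≤ (k:ℕ) then x k else if ℓ ≤ 2*ℓ-1-(k:ℕ) then midVec x z k else z k)
      = midVec x z k
    rw [if_neg (by omega), if_pos (by omega)]
  set p0 : (HGraph b ℓ).Walk (⟨0, by omega⟩, x) (⟨2 * ℓ, by omega⟩, z) :=
    (mkWalk x z (2*ℓ) le_rfl).copy hg0 hg2 with hp0
  have hp0len : p0.length = 2*ℓ := by
    rw [hp0, Walk.length_copy, mkWalk_length]
  have hp0get : ∀ i, i ≤ 2*ℓ → p0.getVert i = gfun x z i := by
    intro i hi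
    rw [hp0, Walk.getVert_copy, mkWalk_getVert x z (2*ℓ) le_rfl i hi]
  have hmidcoord : ∀ k : Fin ℓ, (gfun x z ((k:ℕ)+1)).2 k = midVec x z k := by
    intro k
    have hkl := k.isLt
    show (if (k:ℕ)+1 ≤ (k:ℕ) then x k else if (k:ℕ)+1 ≤ 2*ℓ-1-(k:ℕ) then midVec x z k else z k)
      = midVec x z k
    rw [if_neg (by omega), if_pos (by omega)]
  have hwp0 : hwlen p0
      = 2*ℓ*(3*ℓ*(2^b)^2) + ∑ k : Fin ℓ,
        ((((x k : ℕ):ℤ) - ((midVec x z k : ℕ):ℤ)).natAbs ^ 2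
         + (((midVec x z k : ℕ):ℤ) - ((z k : ℕ):ℤ)).natAbs ^ 2) := by
    rw [hwlen_mono p0 hp0len]
    congr 1
    refine Finset.sum_congr rfl (fun k _ => ?_)
    rw [hp0get ((k:ℕ)+1) (by have := k.isLt; omega), hmidcoord k]
  have hSopt : (∑ k : Fin ℓ, ((((x k : ℕ):ℤ) - ((midVec x z k : ℕ):ℤ)).natAbs ^ 2
         + (((midVec x z k : ℕ):ℤ) - ((z k : ℕ):ℤ)).natAbs ^ 2))
      < 2*(3*ℓ*(2^b)^2) := by
    have hterm : ∀ k : Fin ℓ, ((((x k : ℕ):ℤ) - ((midVec x z k : ℕ):ℤ)).natAbs ^ 2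
         + (((midVec x z k : ℕ):ℤ) - ((z k : ℕ):ℤ)).natAbs ^ 2) ≤ 2*(2^b)^2 := by
      intro k
      have h1 := (x k).isLt
      have h2 := (z k).isLt
      have h3 := (midVec x z k).isLt
      have e1 : (((x k : ℕ):ℤ) - ((midVec x z k : ℕ):ℤ)).natAbs ≤ 2^b := by omega
      have e2 : ((((midVec x z k : ℕ)):ℤ) - ((z k : ℕ):ℤ)).natAbs ≤ 2^b := by omega
      have f1 := Nat.pow_le_pow_left e1 2
      have f2 := Nat.pow_le_pow_left e2 2
      omega
    have hc : 0 < (2^b)^2 := by positivity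
    calc (∑ k : Fin ℓ, ((((x k : ℕ):ℤ) - ((midVec x z k : ℕ):ℤ)).natAbs ^ 2
         + (((midVec x z k : ℕ):ℤ) - ((z k : ℕ):ℤ)).natAbs ^ 2))
        ≤ ℓ * (2*(2^b)^2) := by
          simpa using Finset.sum_le_card_nsmul Finset.univ _ _ (fun k _ => hterm k)
      _ < 2*(3*ℓ*(2^b)^2) := by nlinarith
  have hlb : ∀ q : (HGraph b ℓ).Walk (⟨0, by omega⟩, x) (⟨2 * ℓ, by omega⟩, z),
      hwlen p0 ≤ hwlen q := by
    intro q
    rw [hwp0]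
    rcases eq_or_ne q.length (2*ℓ) with hq | hq
    · rw [hwlen_mono q hq]
      exact Nat.add_le_add_left (Finset.sum_le_sum (fun k _ => natAbs_key (hmid k))) _
    · have hlev := walk_level q
      have h1 : 2*ℓ ≤ 0 + q.length := hlev.1
      have h3 : (0 + 2*ℓ + q.length) % 2 = 0 := hlev.2.2
      have hlen2 : 2*ℓ + 2 ≤ q.length := by omega
      calc 2*ℓ*(3*ℓ*(2^b)^2) + (∑ k : Fin ℓ, ((((x k : ℕ):ℤ) - ((midVec x z k : ℕ):ℤ)).natAbs ^ 2
             + (((midVec x z k : ℕ):ℤ) - ((z k : ℕ):ℤ)).natAbs ^ 2))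
          ≤ 2*ℓ*(3*ℓ*(2^b)^2) + 2*(3*ℓ*(2^b)^2) := Nat.add_le_add_left hSopt.le _
        _ = (2*ℓ+2) * (3*ℓ*(2^b)^2) := by ring
        _ ≤ q.length * (3*ℓ*(2^b)^2) := Nat.mul_le_mul_right _ hlen2
        _ ≤ hwlen q := hwlen_ge q
  have hdist : hwdist b ℓ (⟨0, by omega⟩, x) (⟨2 * ℓ, by omega⟩, z) = hwlen p0 := by
    apply le_antisymm
    · exact Nat.sInf_le ⟨p0, rfl⟩
    · exact le_csInf ⟨hwlen p0, p0, rfl⟩ (by rintro m ⟨q, rfl⟩; exact hlb q)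
  refine ⟨p0, ⟨hdist.symm, ?_⟩, ?_⟩
  · rw [Walk.mem_support_iff_exists_getVert]
    refine ⟨ℓ, ?_, by rw [hp0len]; omega⟩
    rw [hp0get ℓ (by omega), hgl]
  · intro q hq
    have hq' : hwlen q = hwlen p0 := hq.trans hdist
    have hlenq : q.length = 2*ℓ := by
      by_contra hne
      have hlev := walk_level q
      have h1 : 2*ℓ ≤ 0 + q.length := hlev.1
      have h3 : (0 + 2*ℓ + q.length) % 2 = 0 := hlev.2.2
      have hlen2 : 2*ℓ + 2 ≤ q.length := by omega
      have hstrict : hwlen p0 < hwlen q := by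
        calc hwlen p0 = 2*ℓ*(3*ℓ*(2^b)^2) + (∑ k : Fin ℓ,
                ((((x k : ℕ):ℤ) - ((midVec x z k : ℕ):ℤ)).natAbs ^ 2
                 + (((midVec x z k : ℕ):ℤ) - ((z k : ℕ):ℤ)).natAbs ^ 2)) := hwp0
          _ < 2*ℓ*(3*ℓ*(2^b)^2) + 2*(3*ℓ*(2^b)^2) := Nat.add_lt_add_left hSopt _
          _ = (2*ℓ+2) * (3*ℓ*(2^b)^2) := by ring
          _ ≤ q.length * (3*ℓ*(2^b)^2) := Nat.mul_le_mul_right _ hlen2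
          _ ≤ hwlen q := hwlen_ge q
      omega
    rw [hwlen_mono q hlenq, hwp0] at hq'
    have hsum := Nat.add_left_cancel hq'
    have hkk := (Finset.sum_eq_sum_iff_of_le
      (fun (k : Fin ℓ) _ => natAbs_key (A' := ((q.getVert ((k:ℕ)+1)).2 k : ℕ)) (hmid k))).mp hsum.symm
    have ha : ∀ k : Fin ℓ, ((q.getVert ((k:ℕ)+1)).2 k) = midVec x z k := by
      intro k
      exact Fin.ext (natAbs_key_eq (hmid k) (hkk k (Finset.mem_univ k)).symm)
    have hgv : ∀ i, q.getVert i = p0.getVert i := by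
      intro i
      rcases le_or_gt i (2*ℓ) with hi | hi
      · rw [hp0get i hi]
        have hlevi : ((q.getVert i).1 : ℕ) = i := by
          simpa using mono_level q (by simpa using hlenq) i (by omega)
        refine Prod.ext_iff.mpr ⟨Fin.ext ?_, funext fun k => ?_⟩
        · show ((q.getVert i).1 : ℕ) = min i (2*ℓ)
          omega
        · have hkl := k.isLt
          show (q.getVert i).2 k
            = (if i ≤ (k:ℕ) then x k else if i ≤ 2*ℓ-1-(k:ℕ) then midVec x z k else z k)
          by_cases h1 : i ≤ (k:ℕ)
          · rw [if_pos h1]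
            have hcc := const_coord q hlenq k 0 i (by omega) (by omega)
              (fun m hm1 hm2 => by simp only [cidx]; split <;> omega)
            rw [← hcc, Walk.getVert_zero]
          · by_cases h2 : i ≤ 2*ℓ-1-(k:ℕ)
            · rw [if_neg h1, if_pos h2]
              have hcc := const_coord q hlenq k ((k:ℕ)+1) i (by omega) (by omega)
                (fun m hm1 hm2 => by simp only [cidx]; split <;> omega)
              rw [← hcc, ha k]
            · rw [if_neg h1, if_neg h2]
              have hcc := const_coord q hlenq k i (2*ℓ) (by omega) (by omega)
                (fun m hm1 hm2 => by simp only [cidx]; split <;> omega)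
              rw [hcc]
              have hh := Walk.getVert_length q
              rw [hlenq] at hh
              rw [hh]
      · rw [Walk.getVert_of_length_le q (by omega),
          Walk.getVert_of_length_le p0 (by rw [hp0len]; omega)]
    exact walk_ext q p0 (by rw [hlenq, hp0len]) hgv
end

section
/- Let X, Z, Y be finite types and let g : X → Z → Y be such that for every x ∈ X the map z ↦ g x z is injective, and for every z ∈ Z the map x ↦ g x z is injective. Let S : X → Finset Y and T : Z → Finset Y be families of finite sets such that for all x ∈ X and z ∈ Z we have g x z ∈ S x ∪ T z. Then ∑_{x∈X} |S x| + ∑_{z∈Z} |T z| ≥ |X| · |Z|. -/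
/-! Count the pairs `(x, z)` in two ways. Each pair is charged to `S x` or to `T z`, whichever
contains `g x z`. By injectivity of `g x`, the pairs charged to `S x` number at most `#(S x)`;
symmetrically, by injectivity of `g · z`, those charged to `T z` number at most `#(T z)`. -/

open Finset Function

theorem Finset.card_filter_mem_le_of_injective {α β : Type*} [Fintype α] [DecidableEq β]
    {f : α → β} (hf : Injective f) (s : Finset β) : #{a | f a ∈ s} ≤ #s :=
  card_le_card_of_injOn f (fun _ ha ↦ (mem_filter.1 ha).2) hf.injOn

theorem doubly_injective_covering_bound_general {X Z Y : Type*}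
    [Fintype X] [Fintype Z] [DecidableEq Y]
    (g : X → Z → Y)
    (hinj₁ : ∀ x : X, Function.Injective (g x))
    (hinj₂ : ∀ z : Z, Function.Injective (fun x => g x z))
    (S : X → Finset Y) (T : Z → Finset Y)
    (hcov : ∀ x : X, ∀ z : Z, g x z ∈ S x ∪ T z) :
    Fintype.card X * Fintype.card Z ≤ (∑ x : X, (S x).card) + ∑ z : Z, (T z).card := by
  calc Fintype.card X * Fintype.card Z = ∑ _x : X, ∑ _z : Z, 1 := by simp
    _ ≤ ∑ x, ∑ z, ((if g x z ∈ S x then 1 else 0) + if g x z ∈ T z then 1 else 0) := by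
      gcongr with x _ z
      rcases mem_union.1 (hcov x z) with h | h <;> simp [h]
    _ = ∑ x, #{z | g x z ∈ S x} + ∑ z, #{x | g x z ∈ T z} := by
      simp only [sum_add_distrib]
      rw [sum_comm (f := fun x z ↦ if g x z ∈ T z then 1 else 0)]
      simp only [sum_boole, Nat.cast_id]
    _ ≤ ∑ x, #(S x) + ∑ z, #(T z) := by
      gcongr with x _ z
      · exact card_filter_mem_le_of_injective (hinj₁ x) (S x)
      · exact card_filter_mem_le_of_injective (hinj₂ z) (T z)

/-- If `g : X → Z → Y` is injective in each argument separately and `g x z ∈ S x ∪ T z`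
for all `x, z`, then `∑ |S x| + ∑ |T z| ≥ |X|·|Z|`. -/
theorem doubly_injective_covering_bound {X Z Y : Type*}
    [Fintype X] [Fintype Z] [Fintype Y] [DecidableEq Y]
    (g : X → Z → Y)
    (hinj₁ : ∀ x : X, Function.Injective (g x))
    (hinj₂ : ∀ z : Z, Function.Injective (fun x => g x z))
    (S : X → Finset Y) (T : Z → Finset Y)
    (hcov : ∀ x : X, ∀ z : Z, g x z ∈ S x ∪ T z) :
    Fintype.card X * Fintype.card Z ≤ (∑ x : X, (S x).card) + ∑ z : Z, (T z).card :=
  doubly_injective_covering_bound_general g hinj₁ hinj₂ S T hcov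
end

section
/- Let G be a connected simple graph, let (S_v)_{v∈V} be a hub labeling of G, and let (S*_v)_{v∈V} be a family of vertex sets such that for every vertex v and every w ∈ S_v there exists a shortest path from v to w all of whose vertices belong to S*_v. If u and v are vertices admitting a unique shortest path P between them (i.e., there is exactly one walk from u to v of length dist(u,v)), then every vertex of P belongs to S*_u ∪ S*_v. -/
/-- A hub labeling of a (connected) simple graph `G`: a family of finite hub sets
`S v` such that every pair `u, v` has a common hub on a shortest `u`-`v` path. -/
def IsHubLabeling {V : Type*} (G : SimpleGraph V) (S : V → Finset V) : Prop :=
  ∀ u v : V, ∃ w : V, w ∈ S u ∧ w ∈ S v ∧ G.dist u w + G.dist w v = G.dist u v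

/-- Let `(S v)` be a hub labeling and `(Sstar v)` sets such that every hub `w ∈ S v` is
reachable from `v` by a shortest path all of whose vertices lie in `Sstar v`.  If `u, v`
admit a unique shortest path `P`, then every vertex of `P` lies in `Sstar u ∪ Sstar v`. -/
theorem unique_shortest_path_covered_by_monotone_hubs {V : Type*}
    (G : SimpleGraph V) (hG : G.Connected)
    (S : V → Finset V) (hS : IsHubLabeling G S)
    (Sstar : V → Set V)
    (hstar : ∀ v : V, ∀ w ∈ S v,
      ∃ p : G.Walk v w, p.length = G.dist v w ∧ ∀ x ∈ p.support, x ∈ Sstar v)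
    (u v : V) (P : G.Walk u v) (hP : P.length = G.dist u v)
    (huniq : ∀ Q : G.Walk u v, Q.length = G.dist u v → Q = P) :
    ∀ x ∈ P.support, x ∈ Sstar u ∪ Sstar v := by
  intro x hx
  obtain ⟨w, hwu, hwv, hw⟩ := hS u v
  obtain ⟨p₁, hp₁len, hp₁⟩ := hstar u w hwu
  obtain ⟨p₂, hp₂len, hp₂⟩ := hstar v w hwv
  have hQ : (p₁.append p₂.reverse).length = G.dist u v := by
    have h' : G.dist v w = G.dist w v := SimpleGraph.dist_comm
    rw [SimpleGraph.Walk.length_append, SimpleGraph.Walk.length_reverse, hp₁len, hp₂len, h', hw]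
  rw [← huniq _ hQ] at hx
  rcases (SimpleGraph.Walk.mem_support_append_iff _ _).1 hx with h | h
  · exact Or.inl (hp₁ x h)
  · exact Or.inr (hp₂ x (by rwa [SimpleGraph.Walk.support_reverse, List.mem_reverse] at h))
end

section
/- Let G be a connected simple graph on n vertices and let D be an integer with 2 ≤ D ≤ n. Then there exists a set S ⊆ V with |S| ≤ ⌈(n/D)·ln D⌉ such that the number of ordered pairs (u,v) of vertices with |H_{uv}| ≥ D and S ∩ H_{uv} = ∅ is at most n²/D. -/
/-- `HubCandidates G u v` is the set `H_{uv}` of vertices lying on some shortest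
`u`-`v` path. -/
def HubCandidates {V : Type*} (G : SimpleGraph V) (u v : V) : Set V :=
  {x : V | G.dist u x + G.dist x v = G.dist u v}

/-- For any connected graph on `n` vertices and `2 ≤ D ≤ n` there is a set `S` of at most
`⌈(n/D)·ln D⌉` vertices hitting `H_{uv}` for all but at most `n²/D` ordered pairs `(u,v)`
with `|H_{uv}| ≥ D`. -/
theorem random_hitting_set_for_far_pairs (n D : ℕ) (hD : 2 ≤ D) (hDn : D ≤ n)
    (G : SimpleGraph (Fin n)) (hG : G.Connected) :
    ∃ S : Finset (Fin n),
      S.card ≤ ⌈((n : ℝ) / (D : ℝ)) * Real.log (D : ℝ)⌉₊ ∧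
      (({p : Fin n × Fin n |
          D ≤ (HubCandidates G p.1 p.2).ncard ∧
          ∀ x ∈ S, x ∉ HubCandidates G p.1 p.2}.ncard : ℝ)) ≤ (n : ℝ) ^ 2 / (D : ℝ) := by
  classical
  have hn : 2 ≤ n := le_trans hD hDn
  set H : Fin n × Fin n → Set (Fin n) := fun p => HubCandidates G p.1 p.2 with hHdef
  set P : Finset (Fin n × Fin n) := Finset.univ.filter (fun p => D ≤ (H p).ncard) with hPdef
  set Bad : Finset (Fin n) → Finset (Fin n × Fin n) :=
    fun S => P.filter (fun p => ∀ x ∈ S, x ∉ H p) with hBaddef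
  have hcardset : ∀ s : Set (Fin n), (Finset.univ.filter (· ∈ s)).card = s.ncard := by
    intro s
    rw [Set.ncard_eq_toFinset_card']
    congr 1
    ext x
    simp
  -- greedy step
  have step : ∀ S : Finset (Fin n), (Bad S).Nonempty →
      ∃ x : Fin n, n * (Bad (insert x S)).card ≤ (n - D) * (Bad S).card := by
    intro S hne
    set B := (Bad S).card with hB
    set cnt : Fin n → ℕ := fun x => ((Bad S).filter (fun p => x ∈ H p)).card with hcnt
    have htotal : D * B ≤ ∑ x : Fin n, cnt x := by
      have h1 : ∀ x : Fin n, cnt x = ∑ p ∈ Bad S, if x ∈ H p then 1 else 0 := by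
        intro x; rw [hcnt]; exact Finset.card_filter _ _
      calc D * B = ∑ _p ∈ Bad S, D := by rw [Finset.sum_const, smul_eq_mul, mul_comm]
        _ ≤ ∑ p ∈ Bad S, (H p).ncard := by
            refine Finset.sum_le_sum ?_
            intro p hp
            have hp' : p ∈ P := (Finset.mem_filter.mp hp).1
            exact (Finset.mem_filter.mp hp').2
        _ = ∑ p ∈ Bad S, (Finset.univ.filter (· ∈ H p)).card := by
            refine Finset.sum_congr rfl ?_
            intro p _; rw [hcardset]
        _ = ∑ p ∈ Bad S, ∑ x : Fin n, if x ∈ H p then 1 else 0 := by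
            refine Finset.sum_congr rfl ?_
            intro p _; exact Finset.card_filter _ _
        _ = ∑ x : Fin n, ∑ p ∈ Bad S, if x ∈ H p then 1 else 0 := Finset.sum_comm
        _ = ∑ x : Fin n, cnt x := by
            refine Finset.sum_congr rfl ?_
            intro x _; rw [h1]
    have hpig : ∃ x : Fin n, D * B ≤ n * cnt x := by
      have hsum : ∑ _x : Fin n, D * B ≤ ∑ x : Fin n, n * cnt x := by
        rw [Finset.sum_const, ← Finset.mul_sum]
        simp only [Finset.card_univ, Fintype.card_fin, smul_eq_mul]
        calc n * (D * B) ≤ n * ∑ x : Fin n, cnt x := Nat.mul_le_mul_left n htotal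
          _ = n * ∑ x : Fin n, cnt x := rfl
      have huniv : (Finset.univ : Finset (Fin n)).Nonempty := by
        refine Finset.univ_nonempty_iff.mpr ?_
        exact Fin.pos_iff_nonempty.mp (by omega)
      obtain ⟨x, _, hx⟩ := Finset.exists_le_of_sum_le huniv hsum
      exact ⟨x, hx⟩
    obtain ⟨x, hx⟩ := hpig
    refine ⟨x, ?_⟩
    have hsplit : Bad (insert x S) = (Bad S).filter (fun p => x ∉ H p) := by
      ext p
      simp only [hBaddef, Finset.mem_filter, Finset.mem_insert]
      constructor
      · rintro ⟨hp, h⟩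
        exact ⟨⟨hp, fun y hy => h y (Or.inr hy)⟩, h x (Or.inl rfl)⟩
      · rintro ⟨⟨hp, h⟩, hx'⟩
        refine ⟨hp, ?_⟩
        rintro y (rfl | hy)
        · exact hx'
        · exact h y hy
    have hcards : (Bad (insert x S)).card + cnt x = B := by
      rw [hsplit, hcnt, hB, add_comm]
      exact Finset.card_filter_add_card_filter_not _
    have key : (n - D) * B = n * B - D * B := Nat.sub_mul n D B
    have expand : n * (Bad (insert x S)).card + n * cnt x = n * B := by
      rw [← Nat.mul_add, hcards]
    omega
  -- bound for any S
  have hBad_le : ∀ S, (Bad S).card ≤ n ^ 2 := by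
    intro S
    calc (Bad S).card ≤ Fintype.card (Fin n × Fin n) := Finset.card_le_univ _
      _ = n ^ 2 := by simp [sq]
  have hn0 : (0:ℝ) < n := by exact_mod_cast (by omega : 0 < n)
  have hD0 : (0:ℝ) < D := by exact_mod_cast (by omega : 0 < D)
  have hDn' : (D:ℝ) ≤ n := by exact_mod_cast hDn
  set q : ℝ := ((n:ℝ) - D) / n with hqdef
  have hq0 : 0 ≤ q := by
    apply div_nonneg (by linarith) (le_of_lt hn0)
  -- main induction
  have main : ∀ k : ℕ, ∃ S : Finset (Fin n), S.card ≤ k ∧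
      ((Bad S).card : ℝ) ≤ (n:ℝ) ^ 2 * q ^ k := by
    intro k
    induction k with
    | zero =>
      refine ⟨∅, le_refl 0, ?_⟩
      simp only [pow_zero, mul_one]
      exact_mod_cast hBad_le ∅
    | succ k ih =>
      obtain ⟨S, hc, hb⟩ := ih
      by_cases hne : (Bad S).Nonempty
      · obtain ⟨x, hx⟩ := step S hne
        refine ⟨insert x S, ?_, ?_⟩
        · exact le_trans (Finset.card_insert_le x S) (Nat.succ_le_succ hc)
        · have hx' : (n:ℝ) * (Bad (insert x S)).card ≤ ((n:ℝ) - D) * (Bad S).card := by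
            have hcast : ((n - D : ℕ) : ℝ) = (n:ℝ) - D := by
              exact Nat.cast_sub hDn
            calc (n:ℝ) * (Bad (insert x S)).card
                = ((n * (Bad (insert x S)).card : ℕ) : ℝ) := by push_cast; ring
              _ ≤ (((n - D) * (Bad S).card : ℕ) : ℝ) := by exact_mod_cast hx
              _ = ((n:ℝ) - D) * (Bad S).card := by rw [Nat.cast_mul, hcast]
          have h1 : ((Bad (insert x S)).card : ℝ) ≤ q * (Bad S).card := by
            rw [hqdef, div_mul_eq_mul_div]
            rw [le_div_iff₀ hn0]
            linarith [hx']
          calc ((Bad (insert x S)).card : ℝ) ≤ q * (Bad S).card := h1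
            _ ≤ q * ((n:ℝ) ^ 2 * q ^ k) := by
                exact mul_le_mul_of_nonneg_left hb hq0
            _ = (n:ℝ) ^ 2 * q ^ (k + 1) := by ring
      · refine ⟨S, le_trans hc (Nat.le_succ k), ?_⟩
        rw [Finset.not_nonempty_iff_eq_empty] at hne
        rw [hne]
        simp only [Finset.card_empty, Nat.cast_zero]
        positivity
  set k : ℕ := ⌈((n : ℝ) / (D : ℝ)) * Real.log (D : ℝ)⌉₊ with hkdef
  obtain ⟨S, hScard, hSbound⟩ := main k
  refine ⟨S, hScard, ?_⟩
  have hset : {p : Fin n × Fin n |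
      D ≤ (HubCandidates G p.1 p.2).ncard ∧
      ∀ x ∈ S, x ∉ HubCandidates G p.1 p.2} = ↑(Bad S) := by
    ext p
    simp [hBaddef, hPdef, hHdef]
  rw [hset, Set.ncard_coe_finset]
  -- analytic bound
  have hq_exp : q ≤ Real.exp (-(D / n)) := by
    have := Real.add_one_le_exp (-(D / (n:ℝ)))
    have hq1 : q = 1 - (D:ℝ)/n := by
      rw [hqdef, sub_div, div_self (ne_of_gt hn0)]
    linarith
  have hlogk : Real.log D ≤ (k:ℝ) * ((D:ℝ)/n) := by
    have h1 : ((n : ℝ) / (D : ℝ)) * Real.log (D : ℝ) ≤ (k:ℝ) := Nat.le_ceil _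
    have h2 : ((n : ℝ) / (D : ℝ)) * Real.log (D : ℝ) * ((D:ℝ)/n) ≤ (k:ℝ) * ((D:ℝ)/n) := by
      apply mul_le_mul_of_nonneg_right h1 (by positivity)
    have h3 : ((n : ℝ) / (D : ℝ)) * Real.log (D : ℝ) * ((D:ℝ)/n) = Real.log D := by
      field_simp
    linarith
  have hqk : q ^ k ≤ 1 / D := by
    calc q ^ k ≤ (Real.exp (-(D / n))) ^ k := pow_le_pow_left₀ hq0 hq_exp k
      _ = Real.exp ((k:ℝ) * (-(D / n))) := by
          rw [← Real.exp_nat_mul]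
      _ ≤ Real.exp (-(Real.log D)) := by
          apply Real.exp_le_exp.mpr
          have : (k:ℝ) * (-(D / n)) = -((k:ℝ) * ((D:ℝ)/n)) := by ring
          rw [this]
          linarith
      _ = 1 / D := by
          rw [Real.exp_neg, Real.exp_log hD0, one_div]
  calc ((Bad S).card : ℝ) ≤ (n:ℝ) ^ 2 * q ^ k := hSbound
    _ ≤ (n:ℝ) ^ 2 * (1 / D) := by
        apply mul_le_mul_of_nonneg_left hqk (by positivity)
    _ = (n:ℝ) ^ 2 / D := by ring
end

section
/- Let G be a connected simple graph on n vertices and let D ≥ 2 be an integer. Then there exists a coloring c : V → Fin D³ such that the number of ordered pairs (u,v) of vertices for which |H_{uv}| ≤ D and c is not injective on H_{uv} (i.e., there exist distinct x,y ∈ H_{uv} with c(x) = c(y)) is at most n²/D. -/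
private lemma aux_two_point {n K : ℕ} (x y : Fin n) (hxy : x ≠ y) :
    (Finset.univ.filter (fun c : Fin n → Fin K => c x = c y)).card ≤ K ^ (n - 1) := by
  classical
  have h := Finset.card_le_card_of_injOn
    (f := fun (c : Fin n → Fin K) (i : {i : Fin n // i ≠ x}) => c i.1)
    (s := Finset.univ.filter (fun c : Fin n → Fin K => c x = c y))
    (t := Finset.univ)
    (fun a _ => Finset.mem_univ _)
    (by
      intro c hc c' hc' hcc
      simp only [Finset.coe_filter, Set.mem_setOf_eq, Finset.mem_univ, true_and] at hc hc'
      funext i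
      by_cases hi : i = x
      · subst hi
        have h1 : c y = c' y := congrFun hcc ⟨y, Ne.symm hxy⟩
        rw [hc, hc', h1]
      · exact congrFun hcc ⟨i, hi⟩)
  calc (Finset.univ.filter (fun c : Fin n → Fin K => c x = c y)).card
      ≤ (Finset.univ : Finset ({i : Fin n // i ≠ x} → Fin K)).card := h
    _ = K ^ (n - 1) := by
        have hcard : Fintype.card {i : Fin n // i ≠ x} = n - 1 := by
          rw [Fintype.card_subtype_compl, Fintype.card_subtype_eq, Fintype.card_fin]
        rw [Finset.card_univ, Fintype.card_fun, hcard, Fintype.card_fin]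

/-- For any connected graph on `n` vertices and `D ≥ 2` there is a coloring of the vertices
with `D³` colors such that at most `n²/D` ordered pairs `(u,v)` with `|H_{uv}| ≤ D` get a
color conflict inside `H_{uv}`. -/
theorem random_coloring_few_conflicts (n D : ℕ) (hD : 2 ≤ D)
    (G : SimpleGraph (Fin n)) (hG : G.Connected) :
    ∃ c : Fin n → Fin (D ^ 3),
      (({p : Fin n × Fin n |
          (HubCandidates G p.1 p.2).ncard ≤ D ∧
          ¬ Set.InjOn c (HubCandidates G p.1 p.2)}.ncard : ℝ)) ≤ (n : ℝ) ^ 2 / (D : ℝ) := by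
  classical
  have hDpos : 0 < D := by omega
  have hKpos : 0 < D ^ 3 := by positivity
  haveI : Nonempty (Fin (D ^ 3)) := ⟨⟨0, hKpos⟩⟩
  rcases Nat.eq_zero_or_pos n with hn | hn
  · subst hn
    refine ⟨fun i => i.elim0, ?_⟩
    rw [Set.eq_empty_of_isEmpty
      {p : Fin 0 × Fin 0 | (HubCandidates G p.1 p.2).ncard ≤ D ∧
        ¬ Set.InjOn (fun i => Fin.elim0 i) (HubCandidates G p.1 p.2)}]
    simp
  -- main case
  set bad : (Fin n → Fin (D ^ 3)) → Fin n × Fin n → Prop := fun c p =>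
    (HubCandidates G p.1 p.2).ncard ≤ D ∧ ¬ Set.InjOn c (HubCandidates G p.1 p.2) with hbaddef
  set f : (Fin n → Fin (D ^ 3)) → ℕ := fun c => (Finset.univ.filter (bad c)).card with hfdef
  -- per-pair bound over colorings
  have hpair : ∀ p : Fin n × Fin n,
      (Finset.univ.filter (fun c => bad c p)).card ≤ D ^ 2 * (D ^ 3) ^ (n - 1) := by
    intro p
    by_cases hH : (HubCandidates G p.1 p.2).ncard ≤ D
    case neg => simp [hbaddef, hH]
    have hHfin : (HubCandidates G p.1 p.2).Finite := Set.toFinite _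
    set Hf := hHfin.toFinset with hHf
    have hsub : Finset.univ.filter (fun c => bad c p) ⊆
        (Hf ×ˢ Hf).biUnion (fun q => Finset.univ.filter
          (fun c : Fin n → Fin (D ^ 3) => q.1 ≠ q.2 ∧ c q.1 = c q.2)) := by
      intro c hc
      simp only [Finset.mem_filter, Finset.mem_univ, true_and, hbaddef] at hc
      obtain ⟨-, hinj⟩ := hc
      rw [Set.InjOn] at hinj
      push_neg at hinj
      obtain ⟨x, hx, y, hy, hxy, hne⟩ := hinj
      refine Finset.mem_biUnion.mpr ⟨(x, y), ?_, ?_⟩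
      · simp only [Finset.mem_product, hHf, Set.Finite.mem_toFinset]
        exact ⟨hx, hy⟩
      · simp [hne, hxy]
    calc (Finset.univ.filter (fun c => bad c p)).card
        ≤ ∑ q ∈ Hf ×ˢ Hf, (Finset.univ.filter
            (fun c : Fin n → Fin (D ^ 3) => q.1 ≠ q.2 ∧ c q.1 = c q.2)).card :=
          le_trans (Finset.card_le_card hsub) Finset.card_biUnion_le
      _ ≤ ∑ _q ∈ Hf ×ˢ Hf, (D ^ 3) ^ (n - 1) := by
          apply Finset.sum_le_sum
          intro q _
          by_cases hq12 : q.1 = q.2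
          · simp [hq12]
          · calc (Finset.univ.filter
                (fun c : Fin n → Fin (D ^ 3) => q.1 ≠ q.2 ∧ c q.1 = c q.2)).card
                ≤ (Finset.univ.filter
                  (fun c : Fin n → Fin (D ^ 3) => c q.1 = c q.2)).card :=
                  Finset.card_le_card (by
                    intro c hc
                    simp only [Finset.mem_filter] at hc ⊢
                    exact ⟨hc.1, hc.2.2⟩)
              _ ≤ (D ^ 3) ^ (n - 1) := aux_two_point q.1 q.2 hq12
      _ = (Hf ×ˢ Hf).card * (D ^ 3) ^ (n - 1) := by
          rw [Finset.sum_const, smul_eq_mul]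
      _ ≤ D ^ 2 * (D ^ 3) ^ (n - 1) := by
          apply Nat.mul_le_mul_right
          rw [Finset.card_product]
          have hcard : Hf.card ≤ D := by
            rw [hHf, ← Set.ncard_eq_toFinset_card _ hHfin]; exact hH
          calc Hf.card * Hf.card ≤ D * D := Nat.mul_le_mul hcard hcard
            _ = D ^ 2 := (sq D).symm
  -- double counting
  have hsum : ∑ c : Fin n → Fin (D ^ 3), f c ≤ n ^ 2 * (D ^ 2 * (D ^ 3) ^ (n - 1)) := by
    have heq : ∑ c : Fin n → Fin (D ^ 3), f c
        = ∑ p : Fin n × Fin n, (Finset.univ.filter (fun c => bad c p)).card := by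
      simp only [hfdef, Finset.card_filter]
      exact Finset.sum_comm
    rw [heq]
    calc ∑ p : Fin n × Fin n, (Finset.univ.filter (fun c => bad c p)).card
        ≤ ∑ _p : Fin n × Fin n, D ^ 2 * (D ^ 3) ^ (n - 1) :=
          Finset.sum_le_sum (fun p _ => hpair p)
      _ = n ^ 2 * (D ^ 2 * (D ^ 3) ^ (n - 1)) := by
          rw [Finset.sum_const, smul_eq_mul, Finset.card_univ, Fintype.card_prod,
            Fintype.card_fin]
          ring
  -- choose a minimizing coloring
  obtain ⟨c, -, hcmin⟩ := Finset.exists_min_image Finset.univ f Finset.univ_nonempty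
  have hKn : (D ^ 3) ^ n * f c ≤ n ^ 2 * (D ^ 2 * (D ^ 3) ^ (n - 1)) := by
    calc (D ^ 3) ^ n * f c = ∑ _c' : Fin n → Fin (D ^ 3), f c := by
          rw [Finset.sum_const, smul_eq_mul, Finset.card_univ, Fintype.card_fun,
            Fintype.card_fin, Fintype.card_fin]
      _ ≤ ∑ c' : Fin n → Fin (D ^ 3), f c' :=
          Finset.sum_le_sum (fun c' hc' => hcmin c' hc')
      _ ≤ _ := hsum
  have hfc : D * f c ≤ n ^ 2 := by
    have hpow : (D ^ 3) ^ n = (D ^ 3) ^ (n - 1) * D ^ 3 := by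
      rw [← pow_succ, Nat.sub_add_cancel hn]
    have h1 : (D ^ 3) ^ (n - 1) * (D ^ 3 * f c) ≤ (D ^ 3) ^ (n - 1) * (n ^ 2 * D ^ 2) := by
      calc (D ^ 3) ^ (n - 1) * (D ^ 3 * f c) = (D ^ 3) ^ n * f c := by rw [hpow]; ring
        _ ≤ n ^ 2 * (D ^ 2 * (D ^ 3) ^ (n - 1)) := hKn
        _ = (D ^ 3) ^ (n - 1) * (n ^ 2 * D ^ 2) := by ring
    have h2 : D ^ 3 * f c ≤ n ^ 2 * D ^ 2 :=
      Nat.le_of_mul_le_mul_left h1 (by positivity)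
    have h3 : (D * f c) * D ^ 2 ≤ n ^ 2 * D ^ 2 := by
      calc (D * f c) * D ^ 2 = D ^ 3 * f c := by ring
        _ ≤ n ^ 2 * D ^ 2 := h2
    exact Nat.le_of_mul_le_mul_right h3 (by positivity)
  refine ⟨c, ?_⟩
  have hset : {p : Fin n × Fin n |
      (HubCandidates G p.1 p.2).ncard ≤ D ∧
      ¬ Set.InjOn c (HubCandidates G p.1 p.2)}.ncard = f c := by
    rw [Set.ncard_eq_toFinset_card _ (Set.toFinite _)]
    congr 1
    ext p
    simp [hbaddef]
  rw [hset, le_div_iff₀ (by exact_mod_cast hDpos)]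
  calc (f c : ℝ) * D = (D * f c : ℕ) := by push_cast; ring
    _ ≤ ((n ^ 2 : ℕ) : ℝ) := by exact_mod_cast hfc
    _ = (n : ℝ) ^ 2 := by push_cast; ring
end

section
/- Let G be a connected simple graph, c : V → ℕ a coloring of its vertices, D ≥ 1 an integer, and a,b ≥ 0 integers with a + b ≥ 1. For h ∈ V, define E^h to be the set of ordered pairs (u,v) of vertices such that dist(u,v) = a + b, |H_{uv}| ≤ D, c is injective on H_{uv}, h ∈ H_{uv}, dist(u,h) = a, and dist(h,v) = b. Then for all h, h' ∈ V and vertices u₁,v₁,u₂,v₂: if (u₁,v₁) ∈ E^h, (u₂,v₂) ∈ E^h, (u₁,v₂) ∈ E^{h'}, and c(h') = c(h), then h' = h. -/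
/-- `(u,v) ∈ E^h` (for parameters `c`, `D`, `a`, `b`): `dist(u,v) = a + b`, `|H_{uv}| ≤ D`,
the coloring `c` is injective on `H_{uv}`, `h ∈ H_{uv}`, `dist(u,h) = a` and
`dist(h,v) = b`. -/
def InEh {V : Type*} (G : SimpleGraph V) (c : V → ℕ) (D a b : ℕ) (h u v : V) : Prop :=
  G.dist u v = a + b ∧
  (HubCandidates G u v).ncard ≤ D ∧
  Set.InjOn c (HubCandidates G u v) ∧
  h ∈ HubCandidates G u v ∧
  G.dist u h = a ∧ G.dist h v = b

/-- If `(u₁,v₁) ∈ E^h`, `(u₂,v₂) ∈ E^h`, `(u₁,v₂) ∈ E^{h'}` and `c h' = c h`,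
then `h' = h`. -/
theorem same_color_cross_pair_same_hub {V : Type*} [Fintype V]
    (G : SimpleGraph V) (hG : G.Connected) (c : V → ℕ) (D a b : ℕ)
    (hD : 1 ≤ D) (hab : 1 ≤ a + b) (h h' u₁ v₁ u₂ v₂ : V)
    (h1 : InEh G c D a b h u₁ v₁)
    (h2 : InEh G c D a b h u₂ v₂)
    (h3 : InEh G c D a b h' u₁ v₂)
    (hcc : c h' = c h) : h' = h := by
  obtain ⟨d3, _, hinj, hmem', _, _⟩ := h3
  have hmem : h ∈ HubCandidates G u₁ v₂ := by
    simp only [HubCandidates, Set.mem_setOf_eq]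
    rw [h1.2.2.2.2.1, h2.2.2.2.2.2, d3]
  exact hinj hmem' hmem hcc
end

section
/- Let G be a connected simple graph on n vertices, c : V → ℕ a coloring, D ≥ 1 an integer, and a,b ≥ 0 integers with a + b ≥ 1. For h ∈ V define E^h as the set of ordered pairs (u,v) with dist(u,v) = a + b, |H_{uv}| ≤ D, c injective on H_{uv}, h ∈ H_{uv}, dist(u,h) = a and dist(h,v) = b. Suppose the Ruzsa–Szemerédi bound with parameter R holds at 2n. For each h let M^h ⊆ E^h be a set of pairs forming a matching (no two pairs of M^h share a first coordinate or share a second coordinate). Then for every color κ, ∑_{h : c(h) = κ} |M^h| ≤ (2n)²/R. (The point is that, viewing each M^h as a set of edges of a bipartite graph on two copies of V, the sets M^h for h of a fixed color κ are pairwise disjoint induced matchings of their union, which is hence a Ruzsa–Szemerédi graph.) -/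
/-- `M` is an induced matching of `G`: a set of edges of `G`, pairwise vertex-disjoint,
which coincides with the edge set of the subgraph of `G` induced by the endpoints of
edges of `M`. -/
def IsInducedMatching {V : Type*} (G : SimpleGraph V) (M : Set (Sym2 V)) : Prop :=
  M ⊆ G.edgeSet ∧
  (∀ e ∈ M, ∀ f ∈ M, e ≠ f → ∀ v : V, v ∈ e → v ∉ f) ∧
  (∀ e ∈ G.edgeSet, (∀ v : V, v ∈ e → ∃ f ∈ M, v ∈ f) → e ∈ M)

/-- The Ruzsa–Szemerédi bound with parameter `R` holds at `N`: every simple graph on `N`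
vertices whose edge set can be partitioned into at most `N` induced matchings has at most
`N²/R` edges. -/
def RSBoundAt (R : ℝ) (N : ℕ) : Prop :=
  ∀ (G : SimpleGraph (Fin N)) (𝓜 : Finset (Set (Sym2 (Fin N)))),
    𝓜.card ≤ N →
    (∀ M ∈ 𝓜, IsInducedMatching G M) →
    (∀ M₁ ∈ 𝓜, ∀ M₂ ∈ 𝓜, M₁ ≠ M₂ → Disjoint M₁ M₂) →
    (⋃ M ∈ 𝓜, M) = G.edgeSet →
    (G.edgeSet.ncard : ℝ) ≤ (N : ℝ) ^ 2 / R

/-- If the Ruzsa–Szemerédi bound with parameter `R` holds at `2n` and, for each `h`,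
`M h ⊆ E^h` is a matching (as a set of ordered pairs), then for every color `κ`,
`∑_{h : c h = κ} |M h| ≤ (2n)²/R`. -/
theorem matchings_of_fixed_color_sum_bound (n : ℕ) (G : SimpleGraph (Fin n))
    (hG : G.Connected) (c : Fin n → ℕ) (D a b : ℕ) (hD : 1 ≤ D) (hab : 1 ≤ a + b)
    (R : ℝ) (hRS : RSBoundAt R (2 * n))
    (M : Fin n → Set (Fin n × Fin n))
    (hME : ∀ h : Fin n, ∀ p ∈ M h, InEh G c D a b h p.1 p.2)
    (hMM : ∀ h : Fin n, ∀ p ∈ M h, ∀ q ∈ M h, p ≠ q → p.1 ≠ q.1 ∧ p.2 ≠ q.2)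
    (κ : ℕ) :
    (∑ h ∈ Finset.univ.filter (fun h : Fin n => c h = κ), ((M h).ncard : ℝ)) ≤
      ((2 * n : ℕ) : ℝ) ^ 2 / R := by
  classical
  set F := Finset.univ.filter (fun h : Fin n => c h = κ) with hF
  have hFc : ∀ h ∈ F, c h = κ := by
    intro h hh
    simpa [hF] using hh
  let ε : Fin n ⊕ Fin n ≃ Fin (2 * n) := finSumFinEquiv.trans (finCongr (two_mul n).symm)
  let eo : Fin n × Fin n → Sym2 (Fin (2 * n)) := fun p => s(ε (Sum.inl p.1), ε (Sum.inr p.2))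
  have hlr : ∀ x y : Fin n, ε (Sum.inl x) ≠ ε (Sum.inr y) := by
    intro x y hxy
    exact absurd (ε.injective hxy) (by simp)
  have eo_inj : Function.Injective eo := by
    intro p q hpq
    simp only [eo, Sym2.eq, Sym2.rel_iff', Prod.mk.injEq, Prod.swap_prod_mk] at hpq
    rcases hpq with ⟨h1, h2⟩ | ⟨h1, h2⟩
    · exact Prod.ext (Sum.inl.injEq _ _ ▸ (ε.injective h1)) (by
        have := ε.injective h2; exact Sum.inr.inj this) |>.symm ▸ rfl
    · exact absurd h1 (hlr _ _)
  have eo_ndiag : ∀ p, ¬ (eo p).IsDiag := by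
    intro p hp
    exact hlr _ _ (Sym2.mk_isDiag_iff.mp hp)
  -- membership in eo image characterization
  have mem_eo : ∀ (v : Fin (2 * n)) (p : Fin n × Fin n),
      v ∈ eo p ↔ v = ε (Sum.inl p.1) ∨ v = ε (Sum.inr p.2) := by
    intro v p; exact Sym2.mem_iff
  -- disjointness of the M h for distinct h ∈ F
  have hdisjM : ∀ h ∈ F, ∀ h' ∈ F, h ≠ h' → Disjoint (M h) (M h') := by
    intro h hh h' hh' hne
    rw [Set.disjoint_left]
    intro p hp hp'
    obtain ⟨_, _, hinj, hmem, _, _⟩ := hME h p hp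
    obtain ⟨_, _, _, hmem', _, _⟩ := hME h' p hp'
    exact hne (hinj hmem hmem' (by rw [hFc h hh, hFc h' hh']))
  let S : Set (Sym2 (Fin (2 * n))) := ⋃ h ∈ F, eo '' M h
  have hSmem : ∀ e, e ∈ S ↔ ∃ h ∈ F, ∃ p ∈ M h, eo p = e := by
    intro e; simp [S, Set.mem_iUnion]
  let G' := SimpleGraph.fromEdgeSet S
  have hES : G'.edgeSet = S := by
    rw [SimpleGraph.edgeSet_fromEdgeSet]
    ext e
    simp only [Set.mem_diff, Set.mem_setOf_eq]
    refine ⟨fun h' => h'.1, fun he => ⟨he, fun hd => ?_⟩⟩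
    obtain ⟨h, hh, p, hp, rfl⟩ := (hSmem e).mp he
    exact eo_ndiag p hd
  let 𝓜 : Finset (Set (Sym2 (Fin (2 * n)))) := F.image (fun h => eo '' M h)
  -- apply RS bound
  have hcard : 𝓜.card ≤ 2 * n := by
    calc 𝓜.card ≤ F.card := Finset.card_image_le
    _ ≤ (Finset.univ : Finset (Fin n)).card := Finset.card_filter_le _ _
    _ = n := by simp
    _ ≤ 2 * n := by omega
  have hind : ∀ N ∈ 𝓜, IsInducedMatching G' N := by
    intro N hN
    obtain ⟨h, hh, rfl⟩ := Finset.mem_image.mp hN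
    refine ⟨?_, ?_, ?_⟩
    · intro e he
      rw [hES]
      exact (hSmem e).mpr (by
        obtain ⟨p, hp, rfl⟩ := he
        exact ⟨h, hh, p, hp, rfl⟩)
    · rintro e ⟨p, hp, rfl⟩ f ⟨q, hq, rfl⟩ hef v hv hvf
      have hpq : p ≠ q := fun h' => hef (by rw [h'])
      obtain ⟨h1, h2⟩ := hMM h p hp q hq hpq
      rcases (mem_eo v p).mp hv with rfl | rfl <;>
        rcases (mem_eo _ q).mp hvf with he' | he'
      · exact h1 (Sum.inl.inj (ε.injective he'))
      · exact hlr _ _ he'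
      · exact hlr _ _ he'.symm
      · exact h2 (Sum.inr.inj (ε.injective he'))
    · intro e he hcov
      rw [hES] at he
      obtain ⟨h'', hh'', p, hp, rfl⟩ := (hSmem e).mp he
      obtain ⟨f₁, hf₁, hvf₁⟩ := hcov (ε (Sum.inl p.1)) (Sym2.mem_mk_left _ _)
      obtain ⟨f₂, hf₂, hvf₂⟩ := hcov (ε (Sum.inr p.2)) (Sym2.mem_mk_right _ _)
      obtain ⟨q₁, hq₁, rfl⟩ := hf₁
      obtain ⟨q₂, hq₂, rfl⟩ := hf₂
      have e1 : p.1 = q₁.1 := by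
        rcases (mem_eo _ q₁).mp hvf₁ with h' | h'
        · exact Sum.inl.inj (ε.injective h')
        · exact absurd h' (hlr _ _)
      have e2 : p.2 = q₂.2 := by
        rcases (mem_eo _ q₂).mp hvf₂ with h' | h'
        · exact absurd h'.symm (hlr _ _)
        · exact Sum.inr.inj (ε.injective h')
      obtain ⟨hd, _, hinj, hmem'', _, _⟩ := hME h'' p hp
      obtain ⟨_, _, _, _, hq1a, _⟩ := hME h q₁ hq₁
      obtain ⟨_, _, _, _, _, hq2b⟩ := hME h q₂ hq₂
      have hmemh : h ∈ HubCandidates G p.1 p.2 := by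
        show G.dist p.1 h + G.dist h p.2 = G.dist p.1 p.2
        rw [e1, e2] at hd ⊢
        rw [hq1a, hq2b, hd]
      have : h = h'' := hinj hmemh hmem'' (by rw [hFc h hh, hFc h'' hh''])
      subst this
      exact ⟨p, hp, rfl⟩
  have hpd : ∀ M₁ ∈ 𝓜, ∀ M₂ ∈ 𝓜, M₁ ≠ M₂ → Disjoint M₁ M₂ := by
    intro M₁ hM₁ M₂ hM₂ hne
    obtain ⟨h₁, hh₁, rfl⟩ := Finset.mem_image.mp hM₁
    obtain ⟨h₂, hh₂, rfl⟩ := Finset.mem_image.mp hM₂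
    have hne' : h₁ ≠ h₂ := fun h' => hne (by rw [h'])
    exact (Set.disjoint_image_iff eo_inj).mpr (hdisjM h₁ hh₁ h₂ hh₂ hne')
  have hunion : (⋃ N ∈ 𝓜, N) = G'.edgeSet := by
    rw [hES]
    ext e
    simp only [Set.mem_iUnion, exists_prop, 𝓜, Finset.mem_image]
    constructor
    · rintro ⟨N, ⟨h, hh, rfl⟩, he⟩
      exact Set.mem_biUnion hh he
    · intro he
      obtain ⟨h, hh, p, hp, rfl⟩ := (hSmem _).mp he
      exact ⟨eo '' M h, ⟨h, hh, rfl⟩, ⟨p, hp, rfl⟩⟩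
  have hbound := hRS G' 𝓜 hcard hind hpd hunion
  rw [hES] at hbound
  -- now compute the cardinality of S
  have hScard : S.ncard = ∑ h ∈ F, (M h).ncard := by
    have hSeq : S = ↑(F.biUnion (fun h => (eo '' M h).toFinset)) := by
      ext e
      simp [S, Set.mem_iUnion]
    rw [hSeq, Set.ncard_coe_finset, Finset.card_biUnion]
    · refine Finset.sum_congr rfl fun h hh => ?_
      rw [← Set.ncard_eq_toFinset_card', Set.ncard_image_of_injective _ eo_inj]
    · intro h hh h' hh' hne
      rw [Function.onFun, Finset.disjoint_left]
      intro e he he'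
      rw [Set.mem_toFinset] at he he'
      exact Set.disjoint_left.mp ((Set.disjoint_image_iff eo_inj).mpr (hdisjM h hh h' hh' hne)) he he'
  calc (∑ h ∈ F, ((M h).ncard : ℝ)) = (S.ncard : ℝ) := by rw [hScard]; push_cast; ring
  _ ≤ _ := hbound
end

section
/- Let H be a finite connected graph with a weight function w assigning to each edge a positive integer, and let G be the unweighted simple graph obtained from H by replacing each edge e = {u,v} of H by a path of w(e) unit edges from u to v through w(e) − 1 new internal vertices (distinct internal vertices for distinct edges). Then for all vertices u, v of H, the shortest-path distance between u and v in G equals the minimum, over all walks from u to v in H, of the sum of the weights of the edges of the walk. -/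
/-!
Lifting a walk of `H` edge by edge along the subdivision paths gives a walk of `G` of the same
weighted length, so `dist_G ≤ dist_w`.  Conversely, the weighted distance `D = dist_w(·, v)`
satisfies `D a ≤ w(a, b) + D b` on edges of `H`; interpolating it along each path, the value at
the `t`-th vertex of the path of `{a, b}` being `min (t + D a) (w(a, b) - t + D b)`, gives a
function on the vertices of `G` that changes by at most one along every edge of `G`, and hence
`D u ≤ dist_G(ι u, ι v)`.
-/

/-- The weighted length of a walk in a graph with edge weights `w`. -/
def weightedLen {V : Type*} {H : SimpleGraph V} (w : V → V → ℕ) {u v : V}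
    (p : H.Walk u v) : ℕ :=
  (p.darts.map (fun d => w d.toProd.1 d.toProd.2)).sum

open SimpleGraph

section Subdivision

variable {V U : Type*}

noncomputable def weightedDist (H : SimpleGraph V) (w : V → V → ℕ) (u v : V) : ℕ :=
  sInf {L : ℕ | ∃ p : H.Walk u v, weightedLen w p = L}

section WeightedDist

variable {H : SimpleGraph V} (w : V → V → ℕ)

@[simp]
lemma weightedLen_nil {u : V} : weightedLen w (Walk.nil : H.Walk u u) = 0 := by
  simp [weightedLen]

@[simp]
lemma weightedLen_cons {a b c : V} (h : H.Adj a b) (p : H.Walk b c) :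
    weightedLen w (Walk.cons h p) = w a b + weightedLen w p := by
  simp [weightedLen]

lemma weightedDist_le {u v : V} (p : H.Walk u v) : weightedDist H w u v ≤ weightedLen w p :=
  Nat.sInf_le ⟨p, rfl⟩

lemma SimpleGraph.Reachable.exists_weightedLen_eq_weightedDist {u v : V}
    (huv : H.Reachable u v) : ∃ p : H.Walk u v, weightedLen w p = weightedDist H w u v :=
  let ⟨p⟩ := huv
  Nat.sInf_mem (s := {L | ∃ p : H.Walk u v, weightedLen w p = L}) ⟨_, p, rfl⟩

@[simp]
lemma weightedDist_self (u : V) : weightedDist H w u u = 0 :=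
  Nat.eq_zero_of_le_zero (by simpa using weightedDist_le w (Walk.nil : H.Walk u u))

lemma weightedDist_le_add_of_adj {a b c : V} (hab : H.Adj a b) (hbc : H.Reachable b c) :
    weightedDist H w a c ≤ w a b + weightedDist H w b c := by
  obtain ⟨p, hp⟩ := hbc.exists_weightedLen_eq_weightedDist w
  simpa [hp] using weightedDist_le w (Walk.cons hab p)

end WeightedDist

lemma SimpleGraph.exists_walk_length_eq_of_adj_succ (G : SimpleGraph U) (f : ℕ → U) :
    ∀ n, (∀ i < n, G.Adj (f i) (f (i + 1))) → ∃ q : G.Walk (f 0) (f n), q.length = n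
  | 0, _ => ⟨Walk.nil, rfl⟩
  | n + 1, hf => by
    obtain ⟨q, hq⟩ := G.exists_walk_length_eq_of_adj_succ f n fun i hi => hf i (by omega)
    exact ⟨q.concat (hf n n.lt_succ_self), by simp [hq]⟩

lemma SimpleGraph.Walk.apply_le_apply_add_length {G : SimpleGraph U} {f : U → ℕ}
    (hf : ∀ x y, G.Adj x y → f x ≤ f y + 1) {x y : U} (q : G.Walk x y) :
    f x ≤ f y + q.length := by
  induction q with
  | nil => simp
  | cons hadj _ ih =>
    have := hf _ _ hadj
    rw [Walk.length_cons]
    omega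

lemma SimpleGraph.Reachable.apply_le_apply_add_dist {G : SimpleGraph U} {f : U → ℕ}
    (hf : ∀ x y, G.Adj x y → f x ≤ f y + 1) {x y : U} (hxy : G.Reachable x y) :
    f x ≤ f y + G.dist x y := by
  obtain ⟨q, hq⟩ := hxy.exists_walk_length_eq_dist
  exact hq ▸ q.apply_le_apply_add_length hf

/-- `G` is the subdivision of `H` in which the edge `{u, v}` becomes the path
`P u v h 0, …, P u v h (w u v)`. -/
structure IsSubdivision (H : SimpleGraph V) (w : V → V → ℕ) (G : SimpleGraph U) (ι : V → U)
    (P : ∀ u v : V, H.Adj u v → ℕ → U) : Prop where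
  weight_symm : ∀ u v : V, w u v = w v u
  injective : Function.Injective ι
  path_zero : ∀ u v : V, ∀ h : H.Adj u v, P u v h 0 = ι u
  path_weight : ∀ u v : V, ∀ h : H.Adj u v, P u v h (w u v) = ι v
  path_reverse : ∀ u v : V, ∀ h : H.Adj u v, ∀ t : ℕ, t ≤ w u v →
    P u v h t = P v u h.symm (w u v - t)
  path_injOn : ∀ u v : V, ∀ h : H.Adj u v, ∀ t t' : ℕ, t ≤ w u v → t' ≤ w u v →
    P u v h t = P u v h t' → t = t'
  path_not_mem_range : ∀ u v : V, ∀ h : H.Adj u v, ∀ t : ℕ, 0 < t → t < w u v →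
    P u v h t ∉ Set.range ι
  path_disjoint : ∀ u v : V, ∀ h : H.Adj u v, ∀ u' v' : V, ∀ h' : H.Adj u' v',
    ∀ t t' : ℕ, 0 < t → t < w u v → 0 < t' → t' < w u' v' →
    P u v h t = P u' v' h' t' → s(u, v) = s(u', v')
  adj_iff : ∀ x y : U, G.Adj x y ↔
    ∃ (u v : V) (h : H.Adj u v) (t : ℕ), t + 1 ≤ w u v ∧
      ((x = P u v h t ∧ y = P u v h (t + 1)) ∨ (y = P u v h t ∧ x = P u v h (t + 1)))

noncomputable def extendToSubdivision {H : SimpleGraph V} (w : V → V → ℕ) (ι : V → U)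
    (P : ∀ u v : V, H.Adj u v → ℕ → U) (D : V → ℕ) (x : U) : ℕ :=
  sInf {n | (∃ c, ι c = x ∧ n = D c) ∨
    ∃ a b h t, t ≤ w a b ∧ P a b h t = x ∧ n = w a b - t + D b}

namespace IsSubdivision

variable {H : SimpleGraph V} {w : V → V → ℕ} {G : SimpleGraph U} {ι : V → U}
  {P : ∀ u v : V, H.Adj u v → ℕ → U} (S : IsSubdivision H w G ι P)
include S

lemma exists_walk_length_eq_weightedLen {a b : V} (p : H.Walk a b) :
    ∃ q : G.Walk (ι a) (ι b), q.length = weightedLen w p := by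
  induction p with
  | nil => exact ⟨Walk.nil, by simp⟩
  | @cons a c b h p ih =>
    obtain ⟨q, hq⟩ := G.exists_walk_length_eq_of_adj_succ (P a c h) (w a c) fun i hi =>
      (S.adj_iff _ _).2 ⟨a, c, h, i, hi, .inl ⟨rfl, rfl⟩⟩
    obtain ⟨q', hq'⟩ := ih
    exact ⟨(q.copy (S.path_zero a c h) (S.path_weight a c h)).append q', by simp [hq, hq']⟩

lemma reachable {u v : V} (huv : H.Reachable u v) : G.Reachable (ι u) (ι v) :=
  huv.elim fun p => ⟨(S.exists_walk_length_eq_weightedLen p).choose⟩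

lemma dist_le_weightedDist {u v : V} (huv : H.Reachable u v) :
    G.dist (ι u) (ι v) ≤ weightedDist H w u v := by
  obtain ⟨p, hp⟩ := huv.exists_weightedLen_eq_weightedDist w
  obtain ⟨q, hq⟩ := S.exists_walk_length_eq_weightedLen p
  exact hp ▸ hq ▸ dist_le q

lemma eq_of_iota_eq_path {c a b : V} {h : H.Adj a b} {t : ℕ} (ht : t ≤ w a b)
    (hc : ι c = P a b h t) : (t = 0 ∧ c = a) ∨ (t = w a b ∧ c = b) := by
  rcases Nat.eq_zero_or_pos t with rfl | ht0
  · exact .inl ⟨rfl, S.injective (hc.trans (S.path_zero a b h))⟩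
  rcases ht.eq_or_lt with rfl | htw
  · exact .inr ⟨rfl, S.injective (hc.trans (S.path_weight a b h))⟩
  · exact absurd ⟨c, hc⟩ (S.path_not_mem_range a b h t ht0 htw)

lemma eq_of_path_eq_path {a b a' b' : V} {h : H.Adj a b} {h' : H.Adj a' b'} {t t' : ℕ}
    (ht0 : 0 < t) (htw : t < w a b) (ht' : t' ≤ w a' b') (heq : P a' b' h' t' = P a b h t) :
    (a' = a ∧ b' = b ∧ t' = t) ∨ (a' = b ∧ b' = a ∧ t' = w a b - t) := by
  have hx := S.path_not_mem_range a b h t ht0 htw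
  have ht'0 : 0 < t' := Nat.pos_of_ne_zero fun h0 => hx ⟨a', by rw [← heq, h0, S.path_zero]⟩
  have ht'w : t' < w a' b' := ht'.lt_of_ne fun hw => hx ⟨b', by rw [← heq, hw, S.path_weight]⟩
  rcases Sym2.eq_iff.1 (S.path_disjoint a b h a' b' h' t t' ht0 htw ht'0 ht'w heq.symm) with
    ⟨rfl, rfl⟩ | ⟨rfl, rfl⟩
  · exact .inl ⟨rfl, rfl, S.path_injOn a b h t' t ht' htw.le heq⟩
  · have := S.weight_symm a b
    refine .inr ⟨rfl, rfl, S.path_injOn b a h' t' (w a b - t) ht' (by omega) ?_⟩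
    exact heq.trans (S.path_reverse a b h t htw.le)

variable {D : V → ℕ} (hD : ∀ a b, H.Adj a b → D a ≤ w a b + D b)
include hD

lemma le_of_iota_eq_path {c a b : V} {h : H.Adj a b} {t : ℕ} (ht : t ≤ w a b)
    (hc : ι c = P a b h t) : D c ≤ w a b - t + D b := by
  rcases S.eq_of_iota_eq_path ht hc with ⟨rfl, rfl⟩ | ⟨rfl, rfl⟩
  · simpa using hD c b h
  · simp

lemma extendToSubdivision_iota (c : V) : extendToSubdivision w ι P D (ι c) = D c := by
  refine IsLeast.csInf_eq ⟨.inl ⟨c, rfl, rfl⟩, ?_⟩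
  rintro n (⟨c', hc', rfl⟩ | ⟨a, b, h, t, ht, hc, rfl⟩)
  · rw [S.injective hc']
  · exact S.le_of_iota_eq_path hD ht hc.symm

lemma extendToSubdivision_path {a b : V} (h : H.Adj a b) {t : ℕ} (ht : t ≤ w a b) :
    extendToSubdivision w ι P D (P a b h t) = min (w a b - t + D b) (t + D a) := by
  have hw := S.weight_symm a b
  refine IsLeast.csInf_eq ⟨?_, ?_⟩
  · rcases min_choice (w a b - t + D b) (t + D a) with hm | hm <;> rw [hm]
    · exact .inr ⟨a, b, h, t, ht, rfl, rfl⟩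
    · exact .inr ⟨b, a, h.symm, w a b - t, by omega, (S.path_reverse a b h t ht).symm, by omega⟩
  rintro n (⟨c, hc, rfl⟩ | ⟨a', b', h', t', ht', hx, rfl⟩)
  · rcases S.eq_of_iota_eq_path ht hc with ⟨rfl, rfl⟩ | ⟨rfl, rfl⟩ <;> omega
  rcases Nat.eq_zero_or_pos t with rfl | ht0
  · have := S.le_of_iota_eq_path hD ht' ((S.path_zero a b h).symm.trans hx.symm)
    omega
  rcases ht.eq_or_lt with rfl | htw
  · have := S.le_of_iota_eq_path hD ht' ((S.path_weight a b h).symm.trans hx.symm)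
    omega
  rcases S.eq_of_path_eq_path ht0 htw ht' hx with ⟨rfl, rfl, rfl⟩ | ⟨rfl, rfl, rfl⟩ <;> omega

lemma extendToSubdivision_le_add_one {x y : U} (hxy : G.Adj x y) :
    extendToSubdivision w ι P D x ≤ extendToSubdivision w ι P D y + 1 := by
  obtain ⟨a, b, h, t, ht, ⟨rfl, rfl⟩ | ⟨rfl, rfl⟩⟩ := (S.adj_iff x y).1 hxy <;>
  · have := S.extendToSubdivision_path hD h (t := t) (by omega)
    have := S.extendToSubdivision_path hD h ht
    omega

omit hD in
lemma weightedDist_le_dist (hH : H.Connected) (u v : V) :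
    weightedDist H w u v ≤ G.dist (ι u) (ι v) := by
  have hD : ∀ a b, H.Adj a b → weightedDist H w a v ≤ w a b + weightedDist H w b v :=
    fun a b hab => weightedDist_le_add_of_adj w hab (hH b v)
  have := (S.reachable (hH u v)).apply_le_apply_add_dist
    fun _ _ => S.extendToSubdivision_le_add_one hD
  simpa [S.extendToSubdivision_iota hD] using this

end IsSubdivision

end Subdivision

theorem subdivision_distance_eq_weighted_distance_general
    {V U : Type*}
    (H : SimpleGraph V) (hH : H.Connected)
    (w : V → V → ℕ)
    (hwsymm : ∀ u v : V, w u v = w v u)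
    (G : SimpleGraph U) (ι : V → U) (hι : Function.Injective ι)
    (P : ∀ u v : V, H.Adj u v → ℕ → U)
    -- the path from `u` to `v` starts at `ι u` and ends at `ι v`:
    (hP0 : ∀ u v : V, ∀ h : H.Adj u v, P u v h 0 = ι u)
    (hPw : ∀ u v : V, ∀ h : H.Adj u v, P u v h (w u v) = ι v)
    -- the path from `v` to `u` is the reversal of the path from `u` to `v`:
    (hPrev : ∀ u v : V, ∀ h : H.Adj u v, ∀ t : ℕ, t ≤ w u v →
      P u v h t = P v u h.symm (w u v - t))
    -- each path visits pairwise distinct vertices: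
    (hPinj : ∀ u v : V, ∀ h : H.Adj u v, ∀ t t' : ℕ, t ≤ w u v → t' ≤ w u v →
      P u v h t = P u v h t' → t = t')
    -- internal vertices of the paths are new vertices:
    (hPint : ∀ u v : V, ∀ h : H.Adj u v, ∀ t : ℕ, 0 < t → t < w u v →
      P u v h t ∉ Set.range ι)
    -- distinct edges of `H` get distinct internal vertices:
    (hPdisj : ∀ u v : V, ∀ h : H.Adj u v, ∀ u' v' : V, ∀ h' : H.Adj u' v',
      ∀ t t' : ℕ, 0 < t → t < w u v → 0 < t' → t' < w u' v' →
      P u v h t = P u' v' h' t' → s(u, v) = s(u', v'))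
    -- the edges of `G` are exactly the unit edges of the subdivision paths:
    (hAdj : ∀ x y : U, G.Adj x y ↔
      ∃ (u v : V) (h : H.Adj u v) (t : ℕ), t + 1 ≤ w u v ∧
        ((x = P u v h t ∧ y = P u v h (t + 1)) ∨ (y = P u v h t ∧ x = P u v h (t + 1)))) :
    ∀ u v : V,
      G.dist (ι u) (ι v) = sInf {L : ℕ | ∃ p : H.Walk u v, weightedLen w p = L} := by
  have S : IsSubdivision H w G ι P := ⟨hwsymm, hι, hP0, hPw, hPrev, hPinj, hPint, hPdisj, hAdj⟩
  intro u v
  exact le_antisymm (S.dist_le_weightedDist (hH u v)) (S.weightedDist_le_dist hH u v)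

/-- Let `H` be a finite connected graph with positive integer edge weights `w`, and let `G`
be the unweighted graph obtained from `H` by replacing each edge `{u,v}` by a path of
`w u v` unit edges through `w u v - 1` new internal vertices (distinct internal vertices
for distinct edges).  The subdivision structure is recorded by an injection `ι : V → U` of
the original vertices and, for every edge `(u,v)` of `H`, a parametrized path
`P u v h : ℕ → U` from `ι u` to `ι v`.  Then for all original vertices `u, v`, the
shortest-path distance between `ι u` and `ι v` in `G` equals the minimum weighted length
of a walk from `u` to `v` in `H`. -/
theorem subdivision_distance_eq_weighted_distance
    {V U : Type*} [Fintype V] [Fintype U]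
    (H : SimpleGraph V) (hH : H.Connected)
    (w : V → V → ℕ)
    (hwsymm : ∀ u v : V, w u v = w v u)
    (hwpos : ∀ u v : V, H.Adj u v → 0 < w u v)
    (G : SimpleGraph U) (ι : V → U) (hι : Function.Injective ι)
    (P : ∀ u v : V, H.Adj u v → ℕ → U)
    -- the path from `u` to `v` starts at `ι u` and ends at `ι v`:
    (hP0 : ∀ u v : V, ∀ h : H.Adj u v, P u v h 0 = ι u)
    (hPw : ∀ u v : V, ∀ h : H.Adj u v, P u v h (w u v) = ι v)
    -- the path from `v` to `u` is the reversal of the path from `u` to `v`: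
    (hPrev : ∀ u v : V, ∀ h : H.Adj u v, ∀ t : ℕ, t ≤ w u v →
      P u v h t = P v u h.symm (w u v - t))
    -- each path visits pairwise distinct vertices:
    (hPinj : ∀ u v : V, ∀ h : H.Adj u v, ∀ t t' : ℕ, t ≤ w u v → t' ≤ w u v →
      P u v h t = P u v h t' → t = t')
    -- internal vertices of the paths are new vertices:
    (hPint : ∀ u v : V, ∀ h : H.Adj u v, ∀ t : ℕ, 0 < t → t < w u v →
      P u v h t ∉ Set.range ι)
    -- distinct edges of `H` get distinct internal vertices:
    (hPdisj : ∀ u v : V, ∀ h : H.Adj u v, ∀ u' v' : V, ∀ h' : H.Adj u' v',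
      ∀ t t' : ℕ, 0 < t → t < w u v → 0 < t' → t' < w u' v' →
      P u v h t = P u' v' h' t' → s(u, v) = s(u', v'))
    -- the edges of `G` are exactly the unit edges of the subdivision paths:
    (hAdj : ∀ x y : U, G.Adj x y ↔
      ∃ (u v : V) (h : H.Adj u v) (t : ℕ), t + 1 ≤ w u v ∧
        ((x = P u v h t ∧ y = P u v h (t + 1)) ∨ (y = P u v h t ∧ x = P u v h (t + 1))))
    -- every vertex of `G` is an original vertex or an internal vertex of some path:
    (hSurj : ∀ x : U, x ∈ Set.range ι ∨
      ∃ (u v : V) (h : H.Adj u v) (t : ℕ), 0 < t ∧ t < w u v ∧ x = P u v h t) :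
    ∀ u v : V,
      G.dist (ι u) (ι v) = sInf {L : ℕ | ∃ p : H.Walk u v, weightedLen w p = L} :=
  subdivision_distance_eq_weighted_distance_general H hH w hwsymm G ι hι P hP0 hPw hPrev hPinj hPint
    hPdisj hAdj
end
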